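/- arXiv:1902.00787 — 2 statements merged into one kernel-verified Lean document; each statement's English description precedes it below -/
import Mathlib

section
/- If ⟪−,−⟫ is a double Poisson bracket on A, then its associated trilinear maps satisfy the identity m(m(f,a,g), b, h) − m(f, n(a,g,b), h) − m(f, a, m(g,b,h)) = 0 in A*, for all a, b ∈ A and f, g, h ∈ A*. (This is the Stasheff identity SI(5) on the component A*[−1] ⊗ A ⊗ A*[−1] ⊗ A ⊗ A*[−1] of the pre-Calabi-Yau structure associated with the bracket, from the proof of Theorem 5.1.) -/
open TensorProduct

noncomputable section

variable {k : Type*} [Field k] [CharZero k]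
variable {A : Type*} [NonUnitalRing A] [Module k A] [SMulCommClass k A A] [IsScalarTower k A A]

/-- Outer left action of `A` on `A ⊗ A`: `a · (u ⊗ v) = (a*u) ⊗ v`. -/
def lAct (a : A) : A ⊗[k] A →ₗ[k] A ⊗[k] A :=
  TensorProduct.map (LinearMap.mulLeft k a) LinearMap.id

/-- Outer right action of `A` on `A ⊗ A`: `(u ⊗ v) · b = u ⊗ (v*b)`. -/
def rAct (b : A) : A ⊗[k] A →ₗ[k] A ⊗[k] A :=
  TensorProduct.map LinearMap.id (LinearMap.mulRight k b)

/-- `⟪a, u ⊗ v⟫_L = ⟪a,u⟫ ⊗ v`, extended linearly. -/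
def brL (br : A →ₗ[k] A →ₗ[k] A ⊗[k] A) (a : A) :
    A ⊗[k] A →ₗ[k] (A ⊗[k] A) ⊗[k] A :=
  TensorProduct.map (br a) LinearMap.id

/-- The cyclic permutation `σ(u ⊗ v ⊗ w) = w ⊗ u ⊗ v` on `(A ⊗ A) ⊗ A`. -/
def cyc : (A ⊗[k] A) ⊗[k] A →ₗ[k] (A ⊗[k] A) ⊗[k] A :=
  (TensorProduct.assoc k A A A).symm.toLinearMap ∘ₗ
    (TensorProduct.comm k (A ⊗[k] A) A).toLinearMap

/-- A double Poisson bracket: antisymmetry, Leibniz, and double Jacobi. -/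
def IsDoublePoisson (br : A →ₗ[k] A →ₗ[k] A ⊗[k] A) : Prop :=
  (∀ a b : A, br b a = - (TensorProduct.comm k A A) (br a b)) ∧
  (∀ a b c : A, br a (b * c) = rAct c (br a b) + lAct b (br a c)) ∧
  (∀ a b c : A,
    brL br a (br b c) + cyc (brL br b (br c a)) + cyc (cyc (brL br c (br a b))) = 0)

/-- `(f ⊗ g) : A ⊗ A → k`. -/
def pair2 (f g : Module.Dual k A) : A ⊗[k] A →ₗ[k] k :=
  TensorProduct.lift ((LinearMap.mul k k).compl₁₂ f g)

/-- The associated trilinear map `n(a,f,b) = (id ⊗ f)(⟪b,a⟫)`. -/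
def nMap (br : A →ₗ[k] A →ₗ[k] A ⊗[k] A) (a : A) (f : Module.Dual k A) (b : A) : A :=
  TensorProduct.rid k A (TensorProduct.map LinearMap.id f (br b a))

/-- The associated trilinear map `m(f,a,g)(b) = (f ⊗ g)(⟪b,a⟫)`. -/
def mMap (br : A →ₗ[k] A →ₗ[k] A ⊗[k] A) (f : Module.Dual k A) (a : A)
    (g : Module.Dual k A) : Module.Dual k A :=
  pair2 f g ∘ₗ br.flip a

/-- The left action of `A` on `A* = Hom_k(A,k)`: `(a·f)(c) = f(c*a)`. -/
def dL (a : A) (f : Module.Dual k A) : Module.Dual k A :=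
  f ∘ₗ LinearMap.mulRight k a

/-- The right action of `A` on `A* = Hom_k(A,k)`: `(f·b)(c) = f(b*c)`. -/
def dR (f : Module.Dual k A) (b : A) : Module.Dual k A :=
  f ∘ₗ LinearMap.mulLeft k b

/-!
Evaluate at `c` and apply the functional `(f ⊗ h') ⊗ g` to the double Jacobi identity for
`(c, b, a)`. As `((f ⊗ g) ⊗ h) ∘ σ = (g ⊗ h) ⊗ f`, the cyclic permutations move into the functional.
The term of `⟪c, ⟪b,a⟫⟫_L` is then `m(f, n(a,g,b), h')(c)` on the nose, and antisymmetry identifies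
the other two with `m(f, a, m(g,b,h'))(c)` and `-m(m(f,a,g), b, h')(c)`.
-/

section

variable {F : Type*} [Field F] {R : Type*} [NonUnitalRing R] [Module F R]

@[simp]
theorem pair2_tmul (f g : Module.Dual F R) (u v : R) : pair2 f g (u ⊗ₜ v) = f u * g v := by
  simp [pair2]

theorem pair2_comm (f g : Module.Dual F R) (w : R ⊗[F] R) :
    pair2 f g (TensorProduct.comm F R R w) = pair2 g f w := by
  have : pair2 f g ∘ₗ (TensorProduct.comm F R R).toLinearMap = pair2 g f :=
    TensorProduct.ext' fun u v => by simp [mul_comm]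
  exact LinearMap.congr_fun this w

def pair3 (f g h : Module.Dual F R) : (R ⊗[F] R) ⊗[F] R →ₗ[F] F :=
  TensorProduct.lift ((LinearMap.mul F F).compl₁₂ (pair2 f g) h)

@[simp]
theorem pair3_tmul (f g h : Module.Dual F R) (x : R ⊗[F] R) (w : R) :
    pair3 f g h (x ⊗ₜ w) = pair2 f g x * h w := by
  simp [pair3]

theorem pair3_cyc (f g h : Module.Dual F R) (x : (R ⊗[F] R) ⊗[F] R) :
    pair3 f g h (cyc x) = pair3 g h f x := by
  have : pair3 f g h ∘ₗ cyc = pair3 g h f :=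
    TensorProduct.ext_threefold fun u v w => by simp [cyc]; ring
  exact LinearMap.congr_fun this x

variable (br : R →ₗ[F] R →ₗ[F] R ⊗[F] R)

@[simp]
theorem mMap_apply (f : Module.Dual F R) (a : R) (g : Module.Dual F R) (c : R) :
    mMap br f a g c = pair2 f g (br c a) :=
  rfl

theorem pair3_brL (f g h : Module.Dual F R) (c : R) (w : R ⊗[F] R) :
    pair3 f g h (brL br c w) =
      pair2 f g (br c (TensorProduct.rid F R (TensorProduct.map LinearMap.id h w))) := by
  have : pair3 f g h ∘ₗ brL br c = pair2 f g ∘ₗ br c ∘ₗ (TensorProduct.rid F R).toLinearMap ∘ₗ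
      TensorProduct.map LinearMap.id h :=
    TensorProduct.ext' fun u v => by simp [brL, mul_comm]
  exact LinearMap.congr_fun this w

variable {br}

theorem pair2_bracket_swap (hanti : ∀ a b : R, br b a = -TensorProduct.comm F R R (br a b))
    (f g : Module.Dual F R) (a c : R) : pair2 f g (br a c) = -pair2 g f (br c a) := by
  rw [hanti c a, map_neg, pair2_comm]

theorem pair3_brL_of_antisymm (hanti : ∀ a b : R, br b a = -TensorProduct.comm F R R (br a b))
    (f g h : Module.Dual F R) (a : R) (w : R ⊗[F] R) :
    pair3 f g h (brL br a w) = -pair2 (mMap br g a f) h w := by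
  have : pair3 f g h ∘ₗ brL br a = -pair2 (mMap br g a f) h :=
    TensorProduct.ext' fun u v => by simp [brL, pair2_bracket_swap hanti f g a u]
  exact LinearMap.congr_fun this w

end

/-- If `⟪-,-⟫` is a double Poisson bracket, then
`m(m(f,a,g), b, h) − m(f, n(a,g,b), h) − m(f, a, m(g,b,h)) = 0` in `A*` (the Stasheff
identity SI(5) on the component `A*[-1] ⊗ A ⊗ A*[-1] ⊗ A ⊗ A*[-1]`). -/
theorem quinticStasheff_on_dual_component (br : A →ₗ[k] A →ₗ[k] A ⊗[k] A)
    (h : IsDoublePoisson br) :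
    ∀ (a b : A) (f g h' : Module.Dual k A),
      mMap br (mMap br f a g) b h' - mMap br f (nMap br a g b) h'
        - mMap br f a (mMap br g b h') = 0 := by
  obtain ⟨hanti, -, hjac⟩ := h
  intro a b f g h'
  ext c
  have jacobi := congrArg (pair3 f h' g) (hjac c b a)
  rw [map_add, map_add, map_zero, pair3_cyc, pair3_cyc, pair3_cyc, pair3_brL,
    pair3_brL_of_antisymm hanti, pair3_brL_of_antisymm hanti,
    pair2_bracket_swap hanti (mMap br g b h') f] at jacobi
  simp only [LinearMap.sub_apply, LinearMap.zero_apply, mMap_apply, nMap]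
  linear_combination -jacobi
end
end

section
/- Let ⟪−,−⟫ be a double Poisson bracket on A and set {u,v} := μ(⟪u,v⟫), where μ : A ⊗ A → A is the multiplication map. Then {a,{b,c}} + {b,{c,a}} + {c,{a,b}} ∈ [A,A] for all a, b, c ∈ A. (This is the Jacobi identity modulo commutators for the bracket of Proposition 3.3, in the degree 0 case with zero differential.) -/
/-! Modulo commutators, the triple product `u ⊗ v ⊗ w ↦ uvw` is invariant under cyclic
permutation. By Leibniz, `{a, uv}` is then the triple product of `⟪a,u⟫ ⊗ v + ⟪a,v⟫ ⊗ u`, so by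
antisymmetry the Jacobi sum is the difference of the triple products of the double Jacobi sums
for `(a, b, c)` and `(a, c, b)`, up to cyclic permutations of their terms; both vanish. -/

open TensorProduct

noncomputable section

variable {k : Type*} [Field k] [CharZero k]
variable {A : Type*} [NonUnitalRing A] [Module k A] [SMulCommClass k A A] [IsScalarTower k A A]

/-- The multiplication map `μ : A ⊗ A → A`. -/
def mu : A ⊗[k] A →ₗ[k] A := TensorProduct.lift (LinearMap.mul k A)

/-- The `k`-linear span `[A,A]` of all commutators `ab − ba`. -/
def commSpan : Submodule k A := Submodule.span k {x : A | ∃ a b : A, x = a * b - b * a}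

section

omit [CharZero k]

local notation "π" => Submodule.mkQ (commSpan (k := k) (A := A))

omit [SMulCommClass k A A] [IsScalarTower k A A] in
lemma mkQ_mul_comm (x y : A) : π (x * y) = π (y * x) :=
  (Submodule.Quotient.eq _).mpr (Submodule.subset_span ⟨x, y, rfl⟩)

@[simp]
lemma mu_tmul (u v : A) : mu (u ⊗ₜ[k] v) = u * v := rfl

def traceMul3 : (A ⊗[k] A) ⊗[k] A →ₗ[k] A ⧸ commSpan (k := k) (A := A) :=
  π ∘ₗ mu ∘ₗ TensorProduct.map mu LinearMap.id

@[simp]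
lemma traceMul3_tmul (u v w : A) : traceMul3 ((u ⊗ₜ[k] v) ⊗ₜ[k] w) = π (u * v * w) := rfl

lemma traceMul3_cyc (x : (A ⊗[k] A) ⊗[k] A) : traceMul3 (cyc x) = traceMul3 x := by
  have h : traceMul3 ∘ₗ cyc = (traceMul3 : (A ⊗[k] A) ⊗[k] A →ₗ[k] _) :=
    TensorProduct.ext_threefold fun u v w => by simp [cyc, mkQ_mul_comm w, mul_assoc]
  exact LinearMap.congr_fun h x

lemma mkQ_mu_rAct (v : A) (t : A ⊗[k] A) : π (mu (rAct v t)) = traceMul3 (t ⊗ₜ[k] v) := by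
  induction t using TensorProduct.induction_on with
  | zero => simp
  | tmul p q => simp [rAct, mul_assoc]
  | add t₁ t₂ h₁ h₂ => simp only [map_add, TensorProduct.add_tmul, h₁, h₂]

lemma mkQ_mu_lAct (u : A) (t : A ⊗[k] A) : π (mu (lAct u t)) = traceMul3 (t ⊗ₜ[k] u) := by
  induction t using TensorProduct.induction_on with
  | zero => simp
  | tmul p q => simpa [lAct, mul_assoc] using mkQ_mul_comm u (p * q)
  | add t₁ t₂ h₁ h₂ => simp only [map_add, TensorProduct.add_tmul, h₁, h₂]

lemma mkQ_mu_br_mu (br : A →ₗ[k] A →ₗ[k] A ⊗[k] A)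
    (hL : ∀ a b c : A, br a (b * c) = rAct c (br a b) + lAct b (br a c))
    (a : A) (x : A ⊗[k] A) :
    π (mu (br a (mu x))) =
      traceMul3 (brL br a x) + traceMul3 (brL br a (TensorProduct.comm k A A x)) := by
  induction x using TensorProduct.induction_on with
  | zero => simp
  | tmul u v =>
    rw [mu_tmul, hL, map_add, map_add, mkQ_mu_rAct, mkQ_mu_lAct]
    simp only [brL, TensorProduct.map_tmul, LinearMap.id_apply, TensorProduct.comm_tmul]
  | add x₁ x₂ h₁ h₂ => simp only [map_add, h₁, h₂]; abel

lemma traceMul3_doubleJacobi (br : A →ₗ[k] A →ₗ[k] A ⊗[k] A)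
    (hJ : ∀ a b c : A,
      brL br a (br b c) + cyc (brL br b (br c a)) + cyc (cyc (brL br c (br a b))) = 0)
    (a b c : A) :
    traceMul3 (brL br a (br b c)) + traceMul3 (brL br b (br c a))
      + traceMul3 (brL br c (br a b)) = 0 := by
  simpa only [map_add, map_zero, traceMul3_cyc] using congrArg traceMul3 (hJ a b c)

end

/-- For a double Poisson bracket, with `{u,v} := μ(⟪u,v⟫)`, the Jacobi
sum `{a,{b,c}} + {b,{c,a}} + {c,{a,b}}` lies in `[A,A]` for all `a, b, c ∈ A`. -/
theorem jacobi_mod_commutators (br : A →ₗ[k] A →ₗ[k] A ⊗[k] A)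
    (h : IsDoublePoisson br) :
    ∀ a b c : A,
      mu (br a (mu (br b c))) + mu (br b (mu (br c a))) + mu (br c (mu (br a b)))
        ∈ (commSpan (k := k) (A := A)) := by
  obtain ⟨hA, hL, hJ⟩ := h
  intro a b c
  have hswap : ∀ x y : A, TensorProduct.comm k A A (br x y) = -br y x := fun x y => by
    rw [hA x y, neg_neg]
  rw [← Submodule.Quotient.mk_eq_zero, ← Submodule.mkQ_apply, map_add, map_add,
    mkQ_mu_br_mu br hL, mkQ_mu_br_mu br hL, mkQ_mu_br_mu br hL]
  simp only [hswap, map_neg]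
  linear_combination (norm := abel)
    traceMul3_doubleJacobi br hJ a b c - traceMul3_doubleJacobi br hJ a c b
end
end
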